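/- For every real y > 0, D_r(iy)^{−1} · D_l(iy) = 1 − e^{2πi(iny − β/2)}, and for every real y < 0, D_r(iy)^{−1} · D_l(iy) = 1 − e^{−2πi(iny − β/2)}; i.e., the jump of D across the imaginary axis, with D₊ the limiting value from the left half-plane (where D = D_l) and D₋ the limiting value from the right half-plane (where D = D_r), equals 1 − e^{±2iπ(nz−β/2)} for ±Im z > 0. -/

import Mathlib

open Complex Filter Topology

/-- `D_r(z) := e^{nz} Γ(nz − β/2 + 1) / (√(2π) (nz)^{nz+(1−β)/2})`, the formula defining
`D(z)` for `Re z > 0`, using principal branches of complex powers. -/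
noncomputable def Dright (β : ℝ) (n : ℕ) (z : ℂ) : ℂ :=
  Complex.exp ((n : ℂ) * z) * Complex.Gamma ((n : ℂ) * z - (β : ℂ) / 2 + 1) /
    ((Real.sqrt (2 * Real.pi) : ℂ) *
      ((n : ℂ) * z) ^ ((n : ℂ) * z + (1 - (β : ℂ)) / 2))

/-- `D_l(z) := √(2π) (−nz)^{−nz+(β−1)/2} / (e^{−nz} Γ(−nz + β/2))`, the formula defining
`D(z)` for `Re z < 0`, using principal branches of complex powers. -/
noncomputable def Dleft (β : ℝ) (n : ℕ) (z : ℂ) : ℂ :=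
  (Real.sqrt (2 * Real.pi) : ℂ) *
      (-(n : ℂ) * z) ^ (-(n : ℂ) * z + ((β : ℂ) - 1) / 2) /
    (Complex.exp (-(n : ℂ) * z) * Complex.Gamma (-(n : ℂ) * z + (β : ℂ) / 2))

/-! With `w = n z` and `s = w − β/2`, the exponentials in `D_r⁻¹ D_l` cancel and the square roots
give `2π`, leaving `2π w^(s+1/2) (−w)^(−(s+1/2)) / (Γ(s+1) Γ(−s))`. For `±Im w > 0` the principal
logarithm satisfies `log (−w) = log w ∓ πi`, so the power quotient is `e^(±πi(s+1/2))`, and the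
reflection formula `Γ(s+1) Γ(−s) = −π / sin (πs)` turns the whole expression into
`1 − e^(±2πis)`. -/

open scoped Real

namespace Complex

lemma log_neg_of_im_pos {w : ℂ} (hw : 0 < w.im) : log (-w) = log w - π * I := by
  rw [log, log, norm_neg, arg_neg_eq_arg_sub_pi_of_im_pos hw]
  push_cast
  ring

lemma log_neg_of_im_neg {w : ℂ} (hw : w.im < 0) : log (-w) = log w + π * I := by
  rw [log, log, norm_neg, arg_neg_eq_arg_add_pi_of_im_neg hw]
  push_cast
  ring

lemma cpow_mul_neg_cpow_neg_of_im_pos {w : ℂ} (hw : 0 < w.im) (a : ℂ) :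
    w ^ a * (-w) ^ (-a) = exp (π * I * a) := by
  have hw0 : w ≠ 0 := fun h => hw.ne' (by simp [h])
  rw [cpow_def_of_ne_zero hw0, cpow_def_of_ne_zero (neg_ne_zero.2 hw0), ← exp_add,
    log_neg_of_im_pos hw]
  ring_nf

lemma cpow_mul_neg_cpow_neg_of_im_neg {w : ℂ} (hw : w.im < 0) (a : ℂ) :
    w ^ a * (-w) ^ (-a) = exp (-(π * I * a)) := by
  have hw0 : w ≠ 0 := fun h => hw.ne (by simp [h])
  rw [cpow_def_of_ne_zero hw0, cpow_def_of_ne_zero (neg_ne_zero.2 hw0), ← exp_add,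
    log_neg_of_im_neg hw]
  ring_nf

lemma Gamma_add_one_mul_Gamma_neg (s : ℂ) :
    Gamma (s + 1) * Gamma (-s) = -(π / sin (π * s)) := by
  rcases eq_or_ne s 0 with rfl | hs
  · simp -- both sides are junk zeros: `Gamma 0 = 0` and `π / sin 0 = π / 0 = 0`
  have hreflect := Gamma_mul_Gamma_one_sub s
  rw [show (1 : ℂ) - s = -s + 1 by ring, Gamma_add_one (-s) (neg_ne_zero.2 hs)] at hreflect
  rw [Gamma_add_one s hs]
  linear_combination -hreflect

lemma two_pi_mul_exp_div_Gamma_add_one_mul_Gamma_neg (s : ℂ) :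
    2 * π * exp (π * I * (s + 1 / 2)) / (Gamma (s + 1) * Gamma (-s)) =
      1 - exp (2 * π * I * s) := by
  have hquarter : exp (π * I * (s + 1 / 2)) = exp (π * I * s) * I := by
    rw [mul_add, exp_add, show (π : ℂ) * I * (1 / 2) = π / 2 * I by ring, exp_pi_div_two_mul_I]
  have hsin : sin (π * s) = (exp (-(π * I * s)) - exp (π * I * s)) * I / 2 := by
    rw [sin]; ring_nf
  have hdouble : exp (2 * π * I * s) = exp (π * I * s) ^ 2 := by
    rw [← exp_nat_mul]; ring_nf
  rw [Gamma_add_one_mul_Gamma_neg, div_neg, div_div_eq_mul_div, hquarter, hsin, hdouble, exp_neg]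
  field_simp
  linear_combination (exp (π * I * s) ^ 2 - 1) * I_sq

lemma two_pi_mul_exp_neg_div_Gamma_add_one_mul_Gamma_neg (s : ℂ) :
    2 * π * exp (-(π * I * (s + 1 / 2))) / (Gamma (s + 1) * Gamma (-s)) =
      1 - exp (-(2 * π * I * s)) := by
  have hquarter : exp (-(π * I * (s + 1 / 2))) = exp (-(π * I * s)) * -I := by
    rw [show -(π * I * (s + 1 / 2)) = -(π * I * s) + -(π / 2 * I) by ring, exp_add,
      exp_neg (π / 2 * I), exp_pi_div_two_mul_I, inv_I]
  have hsin : sin (π * s) = (exp (-(π * I * s)) - exp (π * I * s)) * I / 2 := by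
    rw [sin]; ring_nf
  have hdouble : exp (-(2 * π * I * s)) = exp (-(π * I * s)) ^ 2 := by
    rw [← exp_nat_mul]; ring_nf
  rw [Gamma_add_one_mul_Gamma_neg, div_neg, div_div_eq_mul_div, hquarter, hsin, hdouble, exp_neg]
  field_simp
  linear_combination (1 - exp (π * I * s) ^ 2) * I_sq

end Complex

lemma Dright_inv_mul_Dleft (β : ℝ) (n : ℕ) (z : ℂ) :
    (Dright β n z)⁻¹ * Dleft β n z =
      2 * π * ((n * z) ^ (n * z - β / 2 + 1 / 2) * (-(n * z)) ^ (-(n * z - β / 2 + 1 / 2))) /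
        (Gamma (n * z - β / 2 + 1) * Gamma (-(n * z - β / 2))) := by
  have hsqrt : (√(2 * π) : ℂ) * √(2 * π) = 2 * π := by
    rw [← ofReal_mul, Real.mul_self_sqrt (by positivity)]
    push_cast
    ring
  have hexp : exp (n * z) * exp (-(n * z)) = 1 := by
    rw [← exp_add, add_neg_cancel, exp_zero]
  unfold Dright Dleft
  rw [show -(n : ℂ) * z + (β - 1) / 2 = -(n * z - β / 2 + 1 / 2) by ring,
    show -(n : ℂ) * z + β / 2 = -(n * z - β / 2) by ring,
    show (n : ℂ) * z + (1 - β) / 2 = n * z - β / 2 + 1 / 2 by ring,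
    show -(n : ℂ) * z = -(n * z) by ring, inv_div, div_mul_div_comm]
  congr 1
  · linear_combination
      ((n * z) ^ (n * z - β / 2 + 1 / 2) * (-(n * z)) ^ (-(n * z - β / 2 + 1 / 2))) * hsqrt
  · linear_combination (Gamma (n * z - β / 2 + 1) * Gamma (-(n * z - β / 2))) * hexp

theorem D_jump_general (β : ℝ) (n : ℕ) (hn : 1 ≤ n) :
    (∀ y : ℝ, 0 < y →
      (Dright β n (Complex.I * (y : ℂ)))⁻¹ * Dleft β n (Complex.I * (y : ℂ)) =
        1 - Complex.exp (2 * (Real.pi : ℂ) * Complex.I *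
          ((n : ℂ) * (Complex.I * (y : ℂ)) - (β : ℂ) / 2))) ∧
    (∀ y : ℝ, y < 0 →
      (Dright β n (Complex.I * (y : ℂ)))⁻¹ * Dleft β n (Complex.I * (y : ℂ)) =
        1 - Complex.exp (-(2 * (Real.pi : ℂ) * Complex.I *
          ((n : ℂ) * (Complex.I * (y : ℂ)) - (β : ℂ) / 2)))) := by
  have him (y : ℝ) : ((n : ℂ) * (I * y)).im = n * y := by simp
  have hn' : (0 : ℝ) < n := by exact_mod_cast hn
  refine ⟨fun y hy => ?_, fun y hy => ?_⟩
  · have hw : 0 < ((n : ℂ) * (I * y)).im := him y ▸ mul_pos hn' hy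
    rw [Dright_inv_mul_Dleft, cpow_mul_neg_cpow_neg_of_im_pos hw,
      two_pi_mul_exp_div_Gamma_add_one_mul_Gamma_neg]
  · have hw : ((n : ℂ) * (I * y)).im < 0 := him y ▸ mul_neg_of_pos_of_neg hn' hy
    rw [Dright_inv_mul_Dleft, cpow_mul_neg_cpow_neg_of_im_neg hw,
      two_pi_mul_exp_neg_div_Gamma_add_one_mul_Gamma_neg]

/-- The jump of `D` across the imaginary axis:
`D₋(z)⁻¹ D₊(z) = 1 − e^{±2iπ(nz−β/2)}` for `±Im z > 0`, where `D₊ = D_l` (limit from the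
left half-plane) and `D₋ = D_r` (limit from the right half-plane). -/
theorem D_jump (β : ℝ) (hβ1 : 1 ≤ β) (hβ2 : β < 2) (n : ℕ) (hn : 1 ≤ n) :
    (∀ y : ℝ, 0 < y →
      (Dright β n (Complex.I * (y : ℂ)))⁻¹ * Dleft β n (Complex.I * (y : ℂ)) =
        1 - Complex.exp (2 * (Real.pi : ℂ) * Complex.I *
          ((n : ℂ) * (Complex.I * (y : ℂ)) - (β : ℂ) / 2))) ∧
    (∀ y : ℝ, y < 0 →
      (Dright β n (Complex.I * (y : ℂ)))⁻¹ * Dleft β n (Complex.I * (y : ℂ)) =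
        1 - Complex.exp (-(2 * (Real.pi : ℂ) * Complex.I *
          ((n : ℂ) * (Complex.I * (y : ℂ)) - (β : ℂ) / 2)))) :=
  D_jump_general β n hn
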